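/- arXiv:1805.02150 — 4 statements merged into one kernel-verified Lean document; each statement's English description precedes it below -/
import Mathlib

section
/- Exact integration identity for the periodic unfolding operator in the bulk: Let d ≥ 1, ε > 0, let Ξ ⊆ ℤ^d be a finite set, let S ⊆ [0,1)^d be Lebesgue measurable, and let f : ℝ^d → ℝ be Lebesgue integrable on the set A = ⋃_{ξ∈Ξ}(εξ + εS). Then the unfolded function (x,y) ↦ f(ε⌊x/ε⌋ + εy) is integrable on Ω̃_ε(Ξ) × S with respect to the product Lebesgue measure, where Ω̃_ε(Ξ) = ⋃_{ξ∈Ξ}(εξ + ε[0,1)^d), and ∫_{Ω̃_ε(Ξ)} ∫_S f(ε⌊x/ε⌋ + εy) dy dx = ∫_A f(x) dx. -/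
/-!
On a cell `εξ + ε[0,1)^d` the floor `⌊x/ε⌋` is the constant `ξ`, so there the unfolded function
depends on `y` alone and the left-hand side splits over the disjoint cells into
`∑ ξ, ε^d ∫_S f(εξ + εy) dy`. The affine change of variables `y ↦ εξ + εy`, of Jacobian `ε^d`,
turns each summand into `∫_{εξ + εS} f`, and these images are disjoint because `S ⊆ [0,1)^d`.
-/

open MeasureTheory Set

section AffineChange

variable {ι : Type*} {ε : ℝ} (c : ι → ℝ)

lemma injective_const_add_mul (hε : ε ≠ 0) :
    Function.Injective fun y : ι → ℝ => fun i => c i + ε * y i := fun _ _ hab =>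
  funext fun i => mul_left_cancel₀ hε (add_left_cancel (congrFun hab i))

variable [Fintype ι]

lemma hasFDerivAt_const_add_mul (y : ι → ℝ) :
    HasFDerivAt (fun y : ι → ℝ => fun i => c i + ε * y i)
      (ε • ContinuousLinearMap.id ℝ (ι → ℝ)) y :=
  ((hasFDerivAt_id y).const_smul ε).const_add c

lemma abs_det_smul_id :
    |(ε • ContinuousLinearMap.id ℝ (ι → ℝ)).det| = |ε| ^ Fintype.card ι := by
  rw [ContinuousLinearMap.det, ContinuousLinearMap.toLinearMap_smul, ContinuousLinearMap.coe_id,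
    LinearMap.det_smul, Module.finrank_fintype_fun_eq_card, LinearMap.det_id, mul_one, abs_pow]

variable {s : Set (ι → ℝ)} {F : Type*} [NormedAddCommGroup F] [NormedSpace ℝ F]

lemma measurableSet_image_const_add_mul (hε : ε ≠ 0) (hs : MeasurableSet s) :
    MeasurableSet ((fun y : ι → ℝ => fun i => c i + ε * y i) '' s) :=
  measurable_image_of_fderivWithin hs
    (fun y _ => (hasFDerivAt_const_add_mul c y).hasFDerivWithinAt)
    (injective_const_add_mul c hε).injOn

lemma volume_image_const_add_mul (hε : ε ≠ 0) (hs : MeasurableSet s) :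
    volume ((fun y : ι → ℝ => fun i => c i + ε * y i) '' s)
      = ENNReal.ofReal (|ε| ^ Fintype.card ι) * volume s := by
  rw [← lintegral_abs_det_fderiv_eq_addHaar_image volume hs
    (fun y _ => (hasFDerivAt_const_add_mul c y).hasFDerivWithinAt)
    (injective_const_add_mul c hε).injOn, abs_det_smul_id, setLIntegral_const]

lemma integrableOn_image_const_add_mul_iff (hε : ε ≠ 0) (hs : MeasurableSet s)
    (g : (ι → ℝ) → F) :
    IntegrableOn g ((fun y : ι → ℝ => fun i => c i + ε * y i) '' s)
      ↔ IntegrableOn (fun y => g fun i => c i + ε * y i) s := by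
  rw [integrableOn_image_iff_integrableOn_abs_det_fderiv_smul volume hs
    (fun y _ => (hasFDerivAt_const_add_mul c y).hasFDerivWithinAt)
    (injective_const_add_mul c hε).injOn, abs_det_smul_id]
  exact integrable_smul_iff (pow_ne_zero _ (abs_ne_zero.mpr hε)) _

lemma setIntegral_image_const_add_mul (hε : ε ≠ 0) (hs : MeasurableSet s)
    (g : (ι → ℝ) → F) :
    ∫ x in (fun y : ι → ℝ => fun i => c i + ε * y i) '' s, g x
      = |ε| ^ Fintype.card ι • ∫ y in s, g fun i => c i + ε * y i := by
  rw [integral_image_eq_integral_abs_det_fderiv_smul volume hs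
    (fun y _ => (hasFDerivAt_const_add_mul c y).hasFDerivWithinAt)
    (injective_const_add_mul c hε).injOn, abs_det_smul_id, integral_smul]

end AffineChange

section Unfolding

open Function

variable {ι : Type*} {ε : ℝ}

lemma floor_div_eq_of_mem_image_unitCube (hε : 0 < ε) (ξ : ι → ℤ) {x : ι → ℝ}
    (hx : x ∈ (fun y : ι → ℝ => fun i => ε * (ξ i : ℝ) + ε * y i) ''
      (Set.pi Set.univ fun _ => Set.Ico (0 : ℝ) 1)) (i : ι) :
    ⌊x i / ε⌋ = ξ i := by
  obtain ⟨y, hy, rfl⟩ := hx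
  show ⌊(ε * (ξ i : ℝ) + ε * y i) / ε⌋ = ξ i
  rw [← mul_add, mul_div_cancel_left₀ _ hε.ne', Int.floor_intCast_add,
    Int.floor_eq_zero_iff.mpr (hy i (mem_univ i)), add_zero]

lemma pairwise_disjoint_image_unitCube (hε : 0 < ε) :
    Pairwise (Disjoint on fun ξ : ι → ℤ =>
      (fun y : ι → ℝ => fun i => ε * (ξ i : ℝ) + ε * y i) ''
        (Set.pi Set.univ fun _ => Set.Ico (0 : ℝ) 1)) := fun ξ ξ' hne =>
  Set.disjoint_left.mpr fun _ hx hx' => hne <| funext fun i =>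
    (floor_div_eq_of_mem_image_unitCube hε ξ hx i).symm.trans
      (floor_div_eq_of_mem_image_unitCube hε ξ' hx' i)

variable [Fintype ι]

lemma measurableSet_image_unitCube (hε : 0 < ε) (ξ : ι → ℤ) :
    MeasurableSet ((fun y : ι → ℝ => fun i => ε * (ξ i : ℝ) + ε * y i) ''
        (Set.pi Set.univ fun _ => Set.Ico (0 : ℝ) 1)) :=
  measurableSet_image_const_add_mul _ hε.ne' (MeasurableSet.univ_pi fun _ => measurableSet_Ico)

lemma volume_image_unitCube (hε : 0 < ε) (ξ : ι → ℤ) :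
    volume ((fun y : ι → ℝ => fun i => ε * (ξ i : ℝ) + ε * y i) ''
        (Set.pi Set.univ fun _ => Set.Ico (0 : ℝ) 1)) = ENNReal.ofReal (ε ^ Fintype.card ι) := by
  rw [volume_image_const_add_mul _ hε.ne' (MeasurableSet.univ_pi fun _ => measurableSet_Ico),
    Real.volume_pi_Ico]
  simp [abs_of_pos hε]

variable {F : Type*} [NormedAddCommGroup F] [NormedSpace ℝ F]
  {S : Set (ι → ℝ)} {f : (ι → ℝ) → F}

lemma integrableOn_unfold_image_unitCube_prod (hε : 0 < ε) (ξ : ι → ℤ) (hS : MeasurableSet S)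
    (hf : IntegrableOn f ((fun y : ι → ℝ => fun i => ε * (ξ i : ℝ) + ε * y i) '' S)) :
    IntegrableOn (fun p : (ι → ℝ) × (ι → ℝ) => f fun i => ε * (⌊p.1 i / ε⌋ : ℝ) + ε * p.2 i)
      (((fun y : ι → ℝ => fun i => ε * (ξ i : ℝ) + ε * y i) ''
        (Set.pi Set.univ fun _ => Set.Ico (0 : ℝ) 1)) ×ˢ S) := by
  set C := (fun y : ι → ℝ => fun i => ε * (ξ i : ℝ) + ε * y i) ''
    (Set.pi Set.univ fun _ => Set.Ico (0 : ℝ) 1)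
  have hC : MeasurableSet C := measurableSet_image_unitCube hε ξ
  have : IsFiniteMeasure (volume.restrict C) :=
    isFiniteMeasure_restrict.mpr (by simp [C, volume_image_unitCube hε])
  have hg := ((integrableOn_image_const_add_mul_iff _ hε.ne' hS f).mp hf).comp_snd
    (volume.restrict C)
  rw [Measure.prod_restrict, ← Measure.volume_eq_prod] at hg
  change IntegrableOn _ (C ×ˢ S) at hg
  refine hg.congr_fun (fun p hp => ?_) (hC.prod hS)
  simp only [floor_div_eq_of_mem_image_unitCube hε ξ hp.1]

lemma eqOn_setIntegral_unfold_image_unitCube (hε : 0 < ε) (ξ : ι → ℤ) :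
    EqOn (fun x => ∫ y in S, f fun i => ε * (⌊x i / ε⌋ : ℝ) + ε * y i)
      (fun _ => ∫ y in S, f fun i => ε * (ξ i : ℝ) + ε * y i)
      ((fun y : ι → ℝ => fun i => ε * (ξ i : ℝ) + ε * y i) ''
        (Set.pi Set.univ fun _ => Set.Ico (0 : ℝ) 1)) := fun _ hx => by
  simp only [floor_div_eq_of_mem_image_unitCube hε ξ hx]

lemma integrableOn_setIntegral_unfold_image_unitCube (hε : 0 < ε) (ξ : ι → ℤ) :
    IntegrableOn (fun x => ∫ y in S, f fun i => ε * (⌊x i / ε⌋ : ℝ) + ε * y i)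
      ((fun y : ι → ℝ => fun i => ε * (ξ i : ℝ) + ε * y i) ''
        (Set.pi Set.univ fun _ => Set.Ico (0 : ℝ) 1)) :=
  (integrableOn_const (by simp [volume_image_unitCube hε])).congr_fun
    (eqOn_setIntegral_unfold_image_unitCube hε ξ).symm (measurableSet_image_unitCube hε ξ)

lemma setIntegral_unfold_image_unitCube [CompleteSpace F] (hε : 0 < ε) (ξ : ι → ℤ)
    (hS : MeasurableSet S) :
    (∫ x in (fun y : ι → ℝ => fun i => ε * (ξ i : ℝ) + ε * y i) ''
        (Set.pi Set.univ fun _ => Set.Ico (0 : ℝ) 1),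
      ∫ y in S, f fun i => ε * (⌊x i / ε⌋ : ℝ) + ε * y i)
    = ∫ x in (fun y : ι → ℝ => fun i => ε * (ξ i : ℝ) + ε * y i) '' S, f x := by
  rw [setIntegral_congr_fun (measurableSet_image_unitCube hε ξ)
      (eqOn_setIntegral_unfold_image_unitCube hε ξ),
    setIntegral_const, measureReal_def, volume_image_unitCube hε,
    ENNReal.toReal_ofReal (by positivity), setIntegral_image_const_add_mul _ hε.ne' hS,
    abs_of_pos hε]

end Unfolding

theorem unfolding_bulk_integral_identity_general
    (d : ℕ) (ε : ℝ) (hε : 0 < ε)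
    (Ξ : Finset (Fin d → ℤ)) (S : Set (Fin d → ℝ))
    (hSmeas : MeasurableSet S)
    (hSsub : S ⊆ Set.pi Set.univ fun _ => Set.Ico (0 : ℝ) 1)
    (f : (Fin d → ℝ) → ℝ)
    (hf : IntegrableOn f
      (⋃ ξ ∈ Ξ, (fun y : Fin d → ℝ => fun i => ε * (ξ i : ℝ) + ε * y i) '' S)) :
    IntegrableOn
      (fun p : (Fin d → ℝ) × (Fin d → ℝ) =>
        f fun i => ε * (⌊p.1 i / ε⌋ : ℝ) + ε * p.2 i)
      ((⋃ ξ ∈ Ξ, (fun y : Fin d → ℝ => fun i => ε * (ξ i : ℝ) + ε * y i) ''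
          (Set.pi Set.univ fun _ => Set.Ico (0 : ℝ) 1)) ×ˢ S) ∧
    (∫ x in (⋃ ξ ∈ Ξ, (fun y : Fin d → ℝ => fun i => ε * (ξ i : ℝ) + ε * y i) ''
          (Set.pi Set.univ fun _ => Set.Ico (0 : ℝ) 1)),
        ∫ y in S, f fun i => ε * (⌊x i / ε⌋ : ℝ) + ε * y i)
      = ∫ x in (⋃ ξ ∈ Ξ, (fun y : Fin d → ℝ => fun i => ε * (ξ i : ℝ) + ε * y i) '' S),
          f x := by
  have hf_cell : ∀ ξ ∈ Ξ, IntegrableOn f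
      ((fun y : Fin d → ℝ => fun i => ε * (ξ i : ℝ) + ε * y i) '' S) :=
    fun ξ hξ => hf.mono_set fun _ hx => mem_biUnion hξ hx
  have hdisj := pairwise_disjoint_image_unitCube (ι := Fin d) hε
  refine ⟨?_, ?_⟩
  · rw [Set.iUnion₂_prod_const, integrableOn_finset_iUnion]
    exact fun ξ hξ => integrableOn_unfold_image_unitCube_prod hε ξ hSmeas (hf_cell ξ hξ)
  · rw [integral_biUnion_finset Ξ
        (fun ξ _ => measurableSet_image_unitCube hε ξ)
        (fun ξ _ ξ' _ hne => hdisj hne)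
        (fun ξ _ => integrableOn_setIntegral_unfold_image_unitCube hε ξ),
      integral_biUnion_finset Ξ (fun ξ _ => measurableSet_image_const_add_mul _ hε.ne' hSmeas)
        (fun ξ _ ξ' _ hne => (hdisj hne).mono (image_mono hSsub) (image_mono hSsub)) hf_cell]
    exact Finset.sum_congr rfl fun ξ _ => setIntegral_unfold_image_unitCube hε ξ hSmeas

/-- Exact integration identity for the periodic unfolding operator in the bulk. -/
theorem unfolding_bulk_integral_identity
    (d : ℕ) (hd : 1 ≤ d) (ε : ℝ) (hε : 0 < ε)
    (Ξ : Finset (Fin d → ℤ)) (S : Set (Fin d → ℝ))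
    (hSmeas : MeasurableSet S)
    (hSsub : S ⊆ Set.pi Set.univ fun _ => Set.Ico (0 : ℝ) 1)
    (f : (Fin d → ℝ) → ℝ)
    (hf : IntegrableOn f
      (⋃ ξ ∈ Ξ, (fun y : Fin d → ℝ => fun i => ε * (ξ i : ℝ) + ε * y i) '' S)) :
    IntegrableOn
      (fun p : (Fin d → ℝ) × (Fin d → ℝ) =>
        f fun i => ε * (⌊p.1 i / ε⌋ : ℝ) + ε * p.2 i)
      ((⋃ ξ ∈ Ξ, (fun y : Fin d → ℝ => fun i => ε * (ξ i : ℝ) + ε * y i) ''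
          (Set.pi Set.univ fun _ => Set.Ico (0 : ℝ) 1)) ×ˢ S) ∧
    (∫ x in (⋃ ξ ∈ Ξ, (fun y : Fin d → ℝ => fun i => ε * (ξ i : ℝ) + ε * y i) ''
          (Set.pi Set.univ fun _ => Set.Ico (0 : ℝ) 1)),
        ∫ y in S, f fun i => ε * (⌊x i / ε⌋ : ℝ) + ε * y i)
      = ∫ x in (⋃ ξ ∈ Ξ, (fun y : Fin d → ℝ => fun i => ε * (ξ i : ℝ) + ε * y i) '' S),
          f x :=
  unfolding_bulk_integral_identity_general d ε hε Ξ S hSmeas hSsub f hf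
end

section
/- Strong L^p convergence of unfolded sequences on the whole space: Let d ≥ 1 and 1 ≤ p < ∞. Let ψ ∈ L^p(ℝ^d) and suppose that for each ε > 0 a function ψ^ε ∈ L^p(ℝ^d) is given with ‖ψ^ε − ψ‖_{L^p(ℝ^d)} → 0 as ε → 0⁺. Then ∫_{ℝ^d} ∫_{[0,1)^d} |ψ^ε(ε⌊x/ε⌋ + εy) − ψ(x)|^p dy dx → 0 as ε → 0⁺. (In particular, taking ψ^ε = ψ, the unfolding of any fixed L^p function converges to it strongly in L^p(ℝ^d × [0,1)^d).) -/
/-!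
On each cell `ε(k + Y)` the unfolding map `(x, y) ↦ ε⌊x/ε⌋ + εy` does not depend on `x`, and in `y`
it is an affine bijection of `Y` onto the cell, scaling volume by `ε^d`, which is also the volume
of the cell. Hence it pushes `volume × volume|Y` forward to `volume`, so unfolding is an isometry
`L^p(ℝ^d) → L^p(ℝ^d × Y)`, and it suffices to show that the unfolding of a single `ψ` converges to
`ψ`. Unfolding moves points by at most `ε`, which gives this for compactly supported continuous `ψ`
by uniform continuity, and for all `ψ ∈ L^p` by density.
-/

open MeasureTheory Set Filter Topology
open scoped ENNReal

lemma ENNReal.tendsto_nhds_zero_of_eventually_le_ofReal_mul {α : Type*} {l : Filter α}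
    {a : α → ℝ≥0∞} {C : ℝ≥0∞} (hC : C ≠ ∞)
    (h : ∀ t : ℝ, 0 < t → ∀ᶠ x in l, a x ≤ ENNReal.ofReal t * C) : Tendsto a l (𝓝 0) := by
  rw [ENNReal.tendsto_nhds_zero]
  intro δ hδ
  have hlim : Tendsto (fun t : ℝ => ENNReal.ofReal t * C) (𝓝[>] (0 : ℝ)) (𝓝 0) := by
    simpa using ENNReal.Tendsto.mul_const (ENNReal.tendsto_ofReal
      (tendsto_nhdsWithin_of_tendsto_nhds (tendsto_id (x := 𝓝 (0 : ℝ))))) (Or.inr hC)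
  obtain ⟨t, ht, htδ⟩ := (eventually_mem_nhdsWithin.and (hlim.eventually (ge_mem_nhds hδ))).exists
  filter_upwards [h t ht] with x hx using hx.trans htδ

variable {E : Type*} [NormedAddCommGroup E]

lemma tendsto_eLpNorm_nhds_zero_iff_integral {α β : Type*} {p : ℝ≥0∞} [MeasurableSpace β]
    {μ : Measure β} {l : Filter α} {f : α → β → E} (hp0 : p ≠ 0) (hp : p ≠ ∞)
    (hf : ∀ᶠ a in l, MemLp (f a) p μ) :
    Tendsto (fun a => eLpNorm (f a) p μ) l (𝓝 0) ↔
      Tendsto (fun a => ∫ b, ‖f a b‖ ^ p.toReal ∂μ) l (𝓝 0) := by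
  have hp' : 0 < p.toReal := ENNReal.toReal_pos hp0 hp
  have hI : ∀ a, 0 ≤ ∫ b, ‖f a b‖ ^ p.toReal ∂μ := fun a => integral_nonneg fun b => by positivity
  rw [tendsto_congr' (hf.mono fun a ha => ha.eLpNorm_eq_integral_rpow_norm hp0 hp)]
  constructor
  · intro h
    have hroot : Tendsto (fun a => (∫ b, ‖f a b‖ ^ p.toReal ∂μ) ^ p.toReal⁻¹) l (𝓝 0) := by
      simpa [Function.comp_def, ENNReal.toReal_ofReal (Real.rpow_nonneg (hI _) _)] using
        (ENNReal.tendsto_toReal ENNReal.zero_ne_top).comp h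
    simpa [← Real.rpow_mul (hI _), hp'.ne', Real.zero_rpow] using
      hroot.rpow_const (Or.inr hp'.le)
  · intro h
    simpa [Real.zero_rpow, hp'.ne'] using
      ENNReal.tendsto_ofReal (h.rpow_const (Or.inr (inv_nonneg.2 hp'.le)))

namespace Unfolding

variable {ι : Type*}

def unitCell (ι : Type*) : Set (ι → ℝ) := univ.pi fun _ => Ico 0 1

noncomputable def floorDiv (ε : ℝ) (x : ι → ℝ) : ι → ℤ := fun i => ⌊x i / ε⌋

def cell (ε : ℝ) (k : ι → ℤ) : Set (ι → ℝ) := floorDiv ε ⁻¹' {k}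

def cellChart (ε : ℝ) (k : ι → ℤ) (y : ι → ℝ) : ι → ℝ := fun i => ε * k i + ε * y i

noncomputable def unfoldingMap (ε : ℝ) (q : (ι → ℝ) × (ι → ℝ)) : ι → ℝ :=
  cellChart ε (floorDiv ε q.1) q.2

noncomputable abbrev unfoldingMeasure (ι : Type*) [Fintype ι] : Measure ((ι → ℝ) × (ι → ℝ)) :=
  volume.prod (volume.restrict (unitCell ι))

lemma measurableSet_unitCell [Countable ι] : MeasurableSet (unitCell ι) :=
  .univ_pi fun _ => measurableSet_Ico

lemma volume_unitCell [Fintype ι] : volume (unitCell ι) = 1 := by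
  simp [unitCell, volume_pi_pi]

instance [Fintype ι] : IsProbabilityMeasure (volume.restrict (unitCell ι)) :=
  ⟨by rw [Measure.restrict_apply_univ, volume_unitCell]⟩

lemma measurable_floorDiv (ε : ℝ) : Measurable (floorDiv (ι := ι) ε) :=
  measurable_pi_lambda _ fun i => Int.measurable_floor.comp (by fun_prop)

lemma measurable_unfoldingMap (ε : ℝ) : Measurable (unfoldingMap (ι := ι) ε) := by
  refine measurable_pi_lambda _ fun i => ?_
  have hk : Measurable fun q : (ι → ℝ) × (ι → ℝ) => (floorDiv ε q.1 i : ℝ) :=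
    (measurable_of_countable (Int.cast : ℤ → ℝ)).comp
      ((measurable_pi_apply i).comp ((measurable_floorDiv ε).comp measurable_fst))
  exact (hk.const_mul ε).add (by fun_prop)

lemma measurableSet_cell [Countable ι] (ε : ℝ) (k : ι → ℤ) : MeasurableSet (cell ε k) :=
  measurable_floorDiv ε (measurableSet_singleton k)

lemma pairwise_disjoint_cell (ε : ℝ) :
    Pairwise (Function.onFun Disjoint (cell ε : (ι → ℤ) → Set (ι → ℝ))) :=
  fun _ _ hkl => (disjoint_singleton.2 hkl).preimage _

lemma volume_eq_sum_restrict_cell [Fintype ι] (ε : ℝ) :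
    (volume : Measure (ι → ℝ)) = Measure.sum fun k => volume.restrict (cell ε k) := by
  rw [← Measure.restrict_iUnion (pairwise_disjoint_cell ε) (measurableSet_cell ε),
    eq_univ_of_forall fun x => mem_iUnion.2 ⟨floorDiv ε x, rfl⟩, Measure.restrict_univ]

lemma cellChart_preimage_cell {ε : ℝ} (hε : 0 < ε) (k : ι → ℤ) :
    cellChart ε k ⁻¹' cell ε k = unitCell ι := by
  ext y
  simp only [cell, floorDiv, cellChart, unitCell, mem_preimage, mem_singleton_iff, funext_iff,
    Set.mem_pi, mem_univ, true_implies]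
  refine forall_congr' fun i => ?_
  rw [show (ε * k i + ε * y i) / ε = k i + y i by field_simp, Int.floor_intCast_add,
    add_eq_left, Int.floor_eq_zero_iff]

lemma volume_preimage_cellChart [Fintype ι] {ε : ℝ} (hε : 0 < ε) (k : ι → ℤ)
    (s : Set (ι → ℝ)) :
    volume (cellChart ε k ⁻¹' s) = ENNReal.ofReal (ε ^ Fintype.card ι)⁻¹ * volume s := by
  have hchart : cellChart ε k = (ε • ·) ∘ (fun y => (fun i => (k i : ℝ)) + y) := by
    ext y i; simp [cellChart, mul_add]
  rw [hchart, preimage_comp, measure_preimage_add, Measure.addHaar_preimage_smul _ hε.ne',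
    Module.finrank_fintype_fun_eq_card, abs_of_pos (by positivity)]

theorem measurePreserving_unfoldingMap [Fintype ι] {ε : ℝ} (hε : 0 < ε) :
    MeasurePreserving (unfoldingMap ε) (unfoldingMeasure ι) volume := by
  refine ⟨measurable_unfoldingMap ε, Measure.ext fun s hs => ?_⟩
  have hslice : ∀ k,
      EqOn (fun x => volume.restrict (unitCell ι) (Prod.mk x ⁻¹' (unfoldingMap ε ⁻¹' s)))
        (fun _ => volume.restrict (unitCell ι) (cellChart ε k ⁻¹' s)) (cell ε k) := by
    intro k x hx
    simp only [cell, mem_preimage, mem_singleton_iff] at hx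
    simp [preimage, unfoldingMap, hx]
  have hcell : ∀ k, ENNReal.ofReal (ε ^ Fintype.card ι)⁻¹ * volume (cell ε k) = 1 := fun k => by
    rw [← volume_preimage_cellChart hε, cellChart_preimage_cell hε, volume_unitCell]
  have hsum := volume_eq_sum_restrict_cell (ι := ι) ε
  calc Measure.map (unfoldingMap ε) (unfoldingMeasure ι) s
      = ∫⁻ x, volume.restrict (unitCell ι) (Prod.mk x ⁻¹' (unfoldingMap ε ⁻¹' s)) := by
        rw [Measure.map_apply (measurable_unfoldingMap ε) hs,
          Measure.prod_apply (measurable_unfoldingMap ε hs)]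
    _ = ∑' k, ∫⁻ x in cell ε k,
          volume.restrict (unitCell ι) (Prod.mk x ⁻¹' (unfoldingMap ε ⁻¹' s)) := by
        rw [← lintegral_sum_measure, ← hsum]
    _ = ∑' k, volume (s ∩ cell ε k) := by
        refine tsum_congr fun k => ?_
        rw [setLIntegral_congr_fun (measurableSet_cell ε k) (hslice k), setLIntegral_const,
          Measure.restrict_apply' measurableSet_unitCell, ← cellChart_preimage_cell hε k,
          ← preimage_inter, volume_preimage_cellChart hε, mul_right_comm, hcell, one_mul]
    _ = volume s := by
        conv_rhs => rw [hsum, Measure.sum_apply _ hs]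
        simp only [Measure.restrict_apply hs]

lemma dist_unfoldingMap_le [Fintype ι] {ε : ℝ} (hε : 0 < ε) (x : ι → ℝ) {y : ι → ℝ}
    (hy : y ∈ unitCell ι) : dist (unfoldingMap ε (x, y)) x ≤ ε := by
  refine (dist_pi_le_iff hε.le).2 fun i => ?_
  obtain ⟨hy0, hy1⟩ := hy i (mem_univ i)
  have hx : x i = ε * (⌊x i / ε⌋ + Int.fract (x i / ε)) := by
    rw [Int.floor_add_fract]; field_simp
  have hfract := Int.fract_nonneg (x i / ε)
  have hfract' := Int.fract_lt_one (x i / ε)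
  rw [Real.dist_eq, abs_le]
  constructor <;>
  · simp only [unfoldingMap, cellChart, floorDiv]
    nlinarith

lemma tendsto_eLpNorm_comp_unfoldingMap_sub_of_hasCompactSupport [Fintype ι] {p : ℝ≥0∞}
    (hp : p ≠ ∞) {g : (ι → ℝ) → E} (hg : Continuous g) (hgs : HasCompactSupport g) :
    Tendsto (fun ε => eLpNorm (fun q => g (unfoldingMap ε q) - g q.1) p (unfoldingMeasure ι))
      (𝓝[>] (0 : ℝ)) (𝓝 0) := by
  rcases eq_or_ne p 0 with rfl | hp0
  · simp
  set K := Metric.cthickening 1 (tsupport g)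
  have hK : IsCompact K := hgs.cthickening
  have hKS : MeasurableSet (K ×ˢ (univ : Set (ι → ℝ))) := hK.isClosed.measurableSet.prod .univ
  have hKS' : unfoldingMeasure ι (K ×ˢ univ) ≠ ∞ := by
    simpa [Measure.prod_prod] using hK.measure_lt_top.ne
  refine ENNReal.tendsto_nhds_zero_of_eventually_le_ofReal_mul
    (ENNReal.rpow_ne_top_of_nonneg (one_div_nonneg.2 p.toReal_nonneg) hKS') fun t ht => ?_
  obtain ⟨r, hr, hgr⟩ :=
    Metric.uniformContinuous_iff.1 (hgs.uniformContinuous_of_continuous hg) t ht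
  filter_upwards [Ioo_mem_nhdsGT (lt_min hr one_pos)] with ε ⟨hε, hεr⟩
  have hbound : ∀ᵐ q ∂unfoldingMeasure ι,
      ‖g (unfoldingMap ε q) - g q.1‖ ≤ (K ×ˢ univ).indicator (fun _ => t) q := by
    filter_upwards [Measure.quasiMeasurePreserving_snd.ae
      (ae_restrict_mem (measurableSet_unitCell (ι := ι)))] with q hq
    have hdist := dist_unfoldingMap_le hε q.1 hq
    by_cases hqK : q.1 ∈ K
    · rw [indicator_of_mem (mk_mem_prod hqK (mem_univ _)), ← dist_eq_norm]
      exact (hgr (hdist.trans_lt (hεr.trans_le (min_le_left _ _)))).le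
    · have hq1 : q.1 ∉ tsupport g := fun h => hqK (Metric.self_subset_cthickening _ h)
      have hUq : unfoldingMap ε q ∉ tsupport g := fun h =>
        hqK (Metric.mem_cthickening_of_dist_le _ _ _ _ h
          ((dist_comm _ _).trans_le (hdist.trans (hεr.le.trans (min_le_right _ _)))))
      simp [image_eq_zero_of_notMem_tsupport hq1, image_eq_zero_of_notMem_tsupport hUq,
        indicator_of_notMem (fun h : q ∈ K ×ˢ univ => hqK h.1)]
  calc eLpNorm (fun q => g (unfoldingMap ε q) - g q.1) p (unfoldingMeasure ι)
      ≤ eLpNorm ((K ×ˢ univ).indicator fun _ => t) p (unfoldingMeasure ι) :=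
        eLpNorm_mono_ae_real hbound
    _ = ENNReal.ofReal t * unfoldingMeasure ι (K ×ˢ univ) ^ (1 / p.toReal) := by
        rw [eLpNorm_indicator_const hKS hp0 hp, Real.enorm_of_nonneg ht.le]

variable [Fintype ι] {p : ℝ≥0∞}

lemma eLpNorm_comp_unfoldingMap_sub_le (hp1 : 1 ≤ p) {ε : ℝ} (hε : 0 < ε) {ψ g : (ι → ℝ) → E}
    (hψ : AEStronglyMeasurable ψ volume) (hg : AEStronglyMeasurable g volume) :
    eLpNorm (fun q => ψ (unfoldingMap ε q) - ψ q.1) p (unfoldingMeasure ι) ≤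
      eLpNorm (ψ - g) p volume
        + eLpNorm (fun q => g (unfoldingMap ε q) - g q.1) p (unfoldingMeasure ι)
        + eLpNorm (ψ - g) p volume := by
  have hU : MeasurePreserving (unfoldingMap ε) (unfoldingMeasure ι) volume :=
    measurePreserving_unfoldingMap hε
  have hfst : MeasurePreserving Prod.fst (unfoldingMeasure ι) volume := measurePreserving_fst
  have hsplit : (fun q => ψ (unfoldingMap ε q) - ψ q.1) =
      (ψ - g) ∘ unfoldingMap ε + (fun q => g (unfoldingMap ε q) - g q.1)
        - (ψ - g) ∘ Prod.fst := by
    ext q; simp only [Pi.add_apply, Pi.sub_apply, Function.comp_apply]; abel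
  have hψg := (hψ.sub hg).comp_measurePreserving hU
  have hgg := (hg.comp_measurePreserving hU).sub (hg.comp_measurePreserving hfst)
  calc _ = eLpNorm ((ψ - g) ∘ unfoldingMap ε + (fun q => g (unfoldingMap ε q) - g q.1)
          - (ψ - g) ∘ Prod.fst) p (unfoldingMeasure ι) := by rw [hsplit]
    _ ≤ eLpNorm ((ψ - g) ∘ unfoldingMap ε) p (unfoldingMeasure ι)
          + eLpNorm (fun q => g (unfoldingMap ε q) - g q.1) p (unfoldingMeasure ι)
          + eLpNorm ((ψ - g) ∘ Prod.fst) p (unfoldingMeasure ι) :=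
        (eLpNorm_sub_le (hψg.add hgg) ((hψ.sub hg).comp_measurePreserving hfst) hp1).trans
          (add_le_add_left (eLpNorm_add_le hψg hgg hp1) _)
    _ = _ := by
        rw [eLpNorm_comp_measurePreserving (hψ.sub hg) hU,
          eLpNorm_comp_measurePreserving (hψ.sub hg) hfst]

theorem tendsto_eLpNorm_comp_unfoldingMap_sub [NormedSpace ℝ E] (hp1 : 1 ≤ p) (hp : p ≠ ∞)
    {ψ : (ι → ℝ) → E} (hψ : MemLp ψ p volume) :
    Tendsto (fun ε => eLpNorm (fun q => ψ (unfoldingMap ε q) - ψ q.1) p (unfoldingMeasure ι))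
      (𝓝[>] (0 : ℝ)) (𝓝 0) := by
  rw [ENNReal.tendsto_nhds_zero]
  intro δ hδ
  obtain ⟨g, hgs, hψg, hg, hgp⟩ :=
    hψ.exists_hasCompactSupport_eLpNorm_sub_le hp
      (ENNReal.half_pos (ENNReal.half_pos hδ.ne').ne').ne'
  filter_upwards [eventually_mem_nhdsWithin, ENNReal.tendsto_nhds_zero.1
    (tendsto_eLpNorm_comp_unfoldingMap_sub_of_hasCompactSupport hp hg hgs) _
    (ENNReal.half_pos hδ.ne')] with ε hε hgε
  calc _ ≤ _ := eLpNorm_comp_unfoldingMap_sub_le hp1 hε hψ.1 hgp.1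
    _ ≤ δ / 2 / 2 + δ / 2 + δ / 2 / 2 := by gcongr
    _ = δ := by rw [add_right_comm, ENNReal.add_halves, ENNReal.add_halves]

theorem tendsto_eLpNorm_comp_unfoldingMap_sub_of_tendsto [NormedSpace ℝ E] (hp1 : 1 ≤ p)
    (hp : p ≠ ∞) {ψ : (ι → ℝ) → E} {Ψ : ℝ → (ι → ℝ) → E} (hψ : MemLp ψ p volume)
    (hΨ : ∀ ε > 0, AEStronglyMeasurable (Ψ ε) volume)
    (hconv : Tendsto (fun ε => eLpNorm (Ψ ε - ψ) p volume) (𝓝[>] (0 : ℝ)) (𝓝 0)) :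
    Tendsto (fun ε => eLpNorm (fun q => Ψ ε (unfoldingMap ε q) - ψ q.1) p (unfoldingMeasure ι))
      (𝓝[>] (0 : ℝ)) (𝓝 0) := by
  refine tendsto_of_tendsto_of_tendsto_of_le_of_le' tendsto_const_nhds
    (by simpa using hconv.add (tendsto_eLpNorm_comp_unfoldingMap_sub hp1 hp hψ))
    (.of_forall fun _ => zero_le) ?_
  filter_upwards [eventually_mem_nhdsWithin] with ε hε
  have hU : MeasurePreserving (unfoldingMap ε) (unfoldingMeasure ι) volume :=
    measurePreserving_unfoldingMap hε
  have hsplit : (fun q => Ψ ε (unfoldingMap ε q) - ψ q.1) =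
      (Ψ ε - ψ) ∘ unfoldingMap ε + fun q => ψ (unfoldingMap ε q) - ψ q.1 := by
    ext q; simp
  rw [hsplit, ← eLpNorm_comp_measurePreserving ((hΨ ε hε).sub hψ.1) hU]
  exact eLpNorm_add_le (((hΨ ε hε).sub hψ.1).comp_measurePreserving hU)
    ((hψ.1.comp_measurePreserving hU).sub (hψ.1.comp_measurePreserving measurePreserving_fst)) hp1

end Unfolding

open Unfolding

theorem unfolding_strong_Lp_convergence_general
    (d : ℕ) (p : ℝ) (hp : 1 ≤ p)
    (ψ : (Fin d → ℝ) → ℝ) (Ψ : ℝ → (Fin d → ℝ) → ℝ)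
    (hψ : MemLp ψ (ENNReal.ofReal p) volume)
    (hΨ : ∀ ε : ℝ, 0 < ε → MemLp (Ψ ε) (ENNReal.ofReal p) volume)
    (hconv : Tendsto (fun ε : ℝ => ∫ x, |Ψ ε x - ψ x| ^ p)
      (𝓝[>] (0 : ℝ)) (𝓝 0)) :
    Tendsto
      (fun ε : ℝ => ∫ x, ∫ y in Set.pi Set.univ fun _ => Set.Ico (0 : ℝ) 1,
        |Ψ ε (fun i => ε * (⌊x i / ε⌋ : ℝ) + ε * y i) - ψ x| ^ p)
      (𝓝[>] (0 : ℝ)) (𝓝 0) := by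
  have hp0 : ENNReal.ofReal p ≠ 0 := by simpa using zero_lt_one.trans_le hp
  have hp1 : 1 ≤ ENNReal.ofReal p := by simpa using ENNReal.ofReal_le_ofReal hp
  have hpp : (ENNReal.ofReal p).toReal = p := ENNReal.toReal_ofReal (zero_le_one.trans hp)
  have hmem : ∀ ε > 0, MemLp (fun q => Ψ ε (unfoldingMap ε q) - ψ q.1) (ENNReal.ofReal p)
      (unfoldingMeasure (Fin d)) := fun ε hε =>
    ((hΨ ε hε).comp_measurePreserving (measurePreserving_unfoldingMap hε)).sub
      (hψ.comp_measurePreserving measurePreserving_fst)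
  have hconv' :
      Tendsto (fun ε => eLpNorm (Ψ ε - ψ) (ENNReal.ofReal p) volume) (𝓝[>] (0 : ℝ)) (𝓝 0) :=
    (tendsto_eLpNorm_nhds_zero_iff_integral (l := 𝓝[>] (0 : ℝ)) hp0 ENNReal.ofReal_ne_top
      (eventually_mem_nhdsWithin.mono fun ε hε => (hΨ ε hε).sub hψ)).2
      (by simpa only [Pi.sub_apply, Real.norm_eq_abs, hpp] using hconv)
  refine ((tendsto_eLpNorm_nhds_zero_iff_integral (l := 𝓝[>] (0 : ℝ)) hp0 ENNReal.ofReal_ne_top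
    (eventually_mem_nhdsWithin.mono hmem)).1 (tendsto_eLpNorm_comp_unfoldingMap_sub_of_tendsto
      hp1 ENNReal.ofReal_ne_top hψ (fun ε hε => (hΨ ε hε).1) hconv')).congr' ?_
  filter_upwards [eventually_mem_nhdsWithin] with ε hε
  rw [integral_prod _ ((hmem ε hε).integrable_norm_rpow hp0 ENNReal.ofReal_ne_top)]
  simp only [Real.norm_eq_abs, hpp]
  rfl

/-- Strong `L^p` convergence of unfolded sequences on the whole space:
if `ψ^ε → ψ` in `L^p(ℝ^d)` as `ε → 0⁺`, then the unfolding of `ψ^ε`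
converges to `ψ` strongly in `L^p(ℝ^d × [0,1)^d)`. -/
theorem unfolding_strong_Lp_convergence
    (d : ℕ) (hd : 1 ≤ d) (p : ℝ) (hp : 1 ≤ p)
    (ψ : (Fin d → ℝ) → ℝ) (Ψ : ℝ → (Fin d → ℝ) → ℝ)
    (hψ : MemLp ψ (ENNReal.ofReal p) volume)
    (hΨ : ∀ ε : ℝ, 0 < ε → MemLp (Ψ ε) (ENNReal.ofReal p) volume)
    (hconv : Tendsto (fun ε : ℝ => ∫ x, |Ψ ε x - ψ x| ^ p)
      (𝓝[>] (0 : ℝ)) (𝓝 0)) :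
    Tendsto
      (fun ε : ℝ => ∫ x, ∫ y in Set.pi Set.univ fun _ => Set.Ico (0 : ℝ) 1,
        |Ψ ε (fun i => ε * (⌊x i / ε⌋ : ℝ) + ε * y i) - ψ x| ^ p)
      (𝓝[>] (0 : ℝ)) (𝓝 0) :=
  unfolding_strong_Lp_convergence_general d p hp ψ Ψ hψ hΨ hconv
end

section
/- Two-scale compactness on oscillating surfaces: Let d ≥ 2, let Γ ⊆ (0,1)^d be a compact set with 0 < H^{d−1}(Γ) < ∞, let Ω ⊆ ℝ^d be a bounded open set, and let (ε_n) be a sequence of positive reals tending to 0. For each n set Γ^{ε_n} = ⋃_{ξ∈Ξ^{ε_n}}(ε_n ξ + ε_n Γ), where Ξ^{ε_n} = {ξ ∈ ℤ^d : ε_n ξ + ε_n[0,1]^d ⊆ Ω}. Let (v_n) be Borel functions on ℝ^d with sup_n ε_n ∫_{Γ^{ε_n}} v_n(x)² dH^{d−1}(x) < ∞. Then there exist a subsequence (v_{n_k}) and a function v ∈ L²(Ω × Γ) (with respect to the product of Lebesgue measure on Ω and H^{d−1} restricted to Γ) such that for every admissible test function φ one has ε_{n_k} ∫_{Γ^{ε_{n_k}}}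 v_{n_k}(x) φ(x, x/ε_{n_k}) dH^{d−1}(x) → ∫_Ω ∫_Γ v(x,y) φ(x,y) dH^{d−1}(y) dx as k → ∞. -/
open MeasureTheory Set Filter Topology

/-- An admissible test function for two-scale convergence on
`Ω ⊆ ℝ^d` (Euclidean): continuous, compactly supported in `Ω` in the first
variable, and `ℤ^d`-periodic in the second variable. -/
def IsAdmissibleTestE (d : ℕ) (Ω : Set (EuclideanSpace ℝ (Fin d)))
    (φ : EuclideanSpace ℝ (Fin d) → EuclideanSpace ℝ (Fin d) → ℝ) : Prop :=
  Continuous (fun p : EuclideanSpace ℝ (Fin d) × EuclideanSpace ℝ (Fin d) => φ p.1 p.2) ∧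
  (∃ K : Set (EuclideanSpace ℝ (Fin d)), IsCompact K ∧ K ⊆ Ω ∧
    ∀ x, x ∉ K → ∀ y, φ x y = 0) ∧
  (∀ x y, ∀ ξ : Fin d → ℤ,
    φ x (WithLp.toLp 2 (fun i => y i + (ξ i : ℝ)) : EuclideanSpace ℝ (Fin d)) = φ x y)

/-- The map `y ↦ εξ + εy` on Euclidean space. -/
noncomputable def cellMapE (d : ℕ) (ε : ℝ) (ξ : Fin d → ℤ) :
    EuclideanSpace ℝ (Fin d) → EuclideanSpace ℝ (Fin d) :=
  fun y => WithLp.toLp 2 (fun i => ε * (ξ i : ℝ) + ε * y i)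

/-- The union of the membranes of all the cells contained in `Ω`. -/
noncomputable def membranes (d : ℕ) (ε : ℝ) (Ω Γ : Set (EuclideanSpace ℝ (Fin d))) :
    Set (EuclideanSpace ℝ (Fin d)) :=
  ⋃ ξ ∈ {ξ : Fin d → ℤ |
      cellMapE d ε ξ '' {y : EuclideanSpace ℝ (Fin d) | ∀ i, y i ∈ Set.Icc (0 : ℝ) 1} ⊆ Ω},
    cellMapE d ε ξ '' Γ

/-!
The proof runs through the periodic unfolding operator `T_ε g (x, y) = g (ε⌊x/ε⌋ + εy)`, set to
zero on the cells not contained in `Ω`. Since `Γ` lies in the open unit cell, the copies `εξ + εΓ`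
are disjoint, and the scaling `H^{d-1}(εξ + εA) = ε^{d-1} H^{d-1}(A)` turns
`ε ∫_{Γ^ε} g dH^{d-1}` exactly into `∫_{Ω × Γ} T_ε g`. Hence `T_ε v_n` is bounded in the separable
Hilbert space `L²(Ω × Γ)`, and by Banach–Alaoglu a subsequence converges weakly to some `v₀`.
For an admissible `φ`, periodicity gives `T_ε (φ(·, ·/ε)) (x, y) = φ(ε⌊x/ε⌋ + εy, y)`, which
converges to `φ` uniformly, hence strongly in `L²`; the two-scale integrals are the inner products
of a weakly and a strongly convergent sequence.
-/

open Function

section Hilbert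

variable {𝕜 H : Type*} [RCLike 𝕜] [NormedAddCommGroup H] [InnerProductSpace 𝕜 H]

theorem exists_subseq_tendsto_inner [CompleteSpace H] [TopologicalSpace.SeparableSpace H]
    {u : ℕ → H} {R : ℝ} (hR : ∀ n, ‖u n‖ ≤ R) :
    ∃ σ : ℕ → ℕ, StrictMono σ ∧ ∃ w : H,
      ∀ ψ, Tendsto (fun k => inner 𝕜 (u (σ k)) ψ) atTop (𝓝 (inner 𝕜 w ψ)) := by
  let u' : ℕ → WeakDual 𝕜 H := fun n => StrongDual.toWeakDual (InnerProductSpace.toDual 𝕜 H (u n))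
  have hball : ∀ n, u' n ∈ WeakDual.toStrongDual ⁻¹' Metric.closedBall 0 R := fun n => by
    simpa [u'] using hR n
  obtain ⟨a, -, σ, hσ, hlim⟩ := WeakDual.isSeqCompact_closedBall 𝕜 H 0 R hball
  refine ⟨σ, hσ, (InnerProductSpace.toDual 𝕜 H).symm (WeakDual.toStrongDual a), fun ψ => ?_⟩
  rw [InnerProductSpace.toDual_symm_apply]
  exact tendsto_iff_forall_eval_tendsto_topDualPairing.1 hlim ψ

theorem tendsto_inner_of_weak_of_tendsto {ι : Type*} {l : Filter ι} {u ψ : ι → H} {w ψ₀ : H}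
    {R : ℝ} (hR : ∀ i, ‖u i‖ ≤ R)
    (hu : ∀ φ, Tendsto (fun i => inner 𝕜 (u i) φ) l (𝓝 (inner 𝕜 w φ)))
    (hψ : Tendsto ψ l (𝓝 ψ₀)) :
    Tendsto (fun i => inner 𝕜 (u i) (ψ i)) l (𝓝 (inner 𝕜 w ψ₀)) := by
  have hsmall : Tendsto (fun i => inner 𝕜 (u i) (ψ i - ψ₀)) l (𝓝 0) := by
    refine squeeze_zero_norm (fun i => (norm_inner_le_norm _ _).trans
      (mul_le_mul_of_nonneg_right (hR i) (norm_nonneg _))) ?_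
    simpa using (tendsto_iff_norm_sub_tendsto_zero.1 hψ).const_mul R
  simpa [inner_sub_right] using hsmall.add (hu ψ₀)

end Hilbert

section Lp

variable {α : Type*} [MeasurableSpace α] {μ : Measure α}

theorem L2.inner_toLp_eq_integral {f g : α → ℝ} (hf : MemLp f 2 μ) (hg : MemLp g 2 μ) :
    inner ℝ (hf.toLp f) (hg.toLp g) = ∫ a, f a * g a ∂μ := by
  rw [L2.inner_def]
  refine integral_congr_ae ?_
  filter_upwards [hf.coeFn_toLp, hg.coeFn_toLp] with a hfa hga
  simp [hfa, hga, mul_comm]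

theorem tendsto_toLp_of_tendstoUniformlyOn [IsFiniteMeasure μ] {p : ENNReal} [Fact (1 ≤ p)]
    {ι : Type*} {l : Filter ι} {f : ι → α → ℝ} {g : α → ℝ} {s : Set α} (hs : ∀ᵐ a ∂μ, a ∈ s)
    (hf : ∀ i, MemLp (f i) p μ) (hg : MemLp g p μ) (hfg : TendstoUniformlyOn f g l s) :
    Tendsto (fun i => (hf i).toLp (f i)) l (𝓝 (hg.toLp g)) := by
  rw [Metric.tendsto_nhds]
  intro r hr
  set M : ℝ := (measureUnivNNReal μ : ℝ) ^ p.toReal⁻¹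
  have hδ : 0 < r / (M + 1) := by positivity
  filter_upwards [Metric.tendstoUniformlyOn_iff.1 hfg _ hδ] with i hi
  rw [dist_eq_norm, ← MemLp.toLp_sub]
  refine (Lp.norm_le_of_ae_bound hδ.le ?_).trans_lt ?_
  · filter_upwards [((hf i).sub hg).coeFn_toLp, hs] with a ha has
    rw [ha, Pi.sub_apply, ← dist_eq_norm, dist_comm]
    exact (hi a has).le
  · rw [mul_div_assoc', div_lt_iff₀ (by positivity)]
    nlinarith [show 0 ≤ M by positivity]

end Lp

theorem L2.inner_toLp_eq_integral_prod {α β : Type*} [MeasurableSpace α] [MeasurableSpace β]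
    {μ : Measure α} {ν : Measure β} [SFinite μ] [SFinite ν] (w : Lp ℝ 2 (μ.prod ν))
    {g : α × β → ℝ} (hg : MemLp g 2 (μ.prod ν)) :
    inner ℝ w (hg.toLp g) = ∫ x, ∫ y, w (x, y) * g (x, y) ∂ν ∂μ := by
  calc inner ℝ w (hg.toLp g) = inner ℝ ((Lp.memLp w).toLp w) (hg.toLp g) := by
        rw [Lp.toLp_coeFn]
    _ = ∫ p, w p * g p ∂μ.prod ν := L2.inner_toLp_eq_integral _ _
    _ = _ := integral_prod _ ((Lp.memLp w).integrable_mul hg)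

theorem ae_mem_prod_restrict {α β : Type*} [MeasurableSpace α] [MeasurableSpace β]
    {μ : Measure α} {ν : Measure β} {s : Set α} {t : Set β} [SFinite (ν.restrict t)]
    (hs : MeasurableSet s) (ht : MeasurableSet t) :
    ∀ᵐ p ∂(μ.restrict s).prod (ν.restrict t), p ∈ s ×ˢ t := by
  rw [Measure.ae_prod_mem_iff_ae_ae_mem (hs.prod ht)]
  filter_upwards [ae_restrict_mem hs] with x hx
  filter_upwards [ae_restrict_mem ht] with y hy
  exact ⟨hx, hy⟩

theorem EuclideanSpace.dist_le_of_forall_dist_le {ι : Type*} [Fintype ι]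
    {x y : EuclideanSpace ℝ ι} {c : ℝ} (hc : 0 ≤ c) (h : ∀ i, dist (x i) (y i) ≤ c) :
    dist x y ≤ √(Fintype.card ι) * c := by
  rw [EuclideanSpace.dist_eq, ← Real.sqrt_sq hc, ← Real.sqrt_mul (Nat.cast_nonneg _)]
  refine Real.sqrt_le_sqrt ?_
  calc ∑ i, dist (x i) (y i) ^ 2 ≤ ∑ _i : ι, c ^ 2 :=
        Finset.sum_le_sum fun i _ => pow_le_pow_left₀ dist_nonneg (h i) 2
    _ = Fintype.card ι * c ^ 2 := by simp

section Cells

variable {d : ℕ} {ε : ℝ} {ξ : Fin d → ℤ} {Ω Γ : Set (EuclideanSpace ℝ (Fin d))}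

local notation "E" => EuclideanSpace ℝ (Fin d)

def unitCube (d : ℕ) : Set (EuclideanSpace ℝ (Fin d)) := {y | ∀ i, y i ∈ Icc (0 : ℝ) 1}

def cellsIn (d : ℕ) (ε : ℝ) (Ω : Set (EuclideanSpace ℝ (Fin d))) : Set (Fin d → ℤ) :=
  {ξ | cellMapE d ε ξ '' unitCube d ⊆ Ω}

theorem membranes_eq_biUnion :
    membranes d ε Ω Γ = ⋃ ξ ∈ cellsIn d ε Ω, cellMapE d ε ξ '' Γ := rfl

noncomputable def cellIndex (ε : ℝ) (x : EuclideanSpace ℝ (Fin d)) : Fin d → ℤ := fun i => ⌊x i / ε⌋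

def cell (d : ℕ) (ε : ℝ) (ξ : Fin d → ℤ) : Set (EuclideanSpace ℝ (Fin d)) :=
  {x | ∀ i, x i ∈ Ico (ε * ξ i) (ε * ξ i + ε)}

theorem cellIndex_eq_iff (hε : 0 < ε) {x : E} : cellIndex ε x = ξ ↔ x ∈ cell d ε ξ := by
  simp only [cellIndex, funext_iff, Int.floor_eq_iff, cell, mem_ofPred_eq, mem_Ico,
    le_div_iff₀ hε, div_lt_iff₀ hε]
  exact forall_congr' fun i => by constructor <;> rintro ⟨h₁, h₂⟩ <;> constructor <;> linarith

theorem mem_cell_cellIndex (hε : 0 < ε) (x : E) : x ∈ cell d ε (cellIndex ε x) :=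
  (cellIndex_eq_iff hε).1 rfl

theorem measurableSet_cell : MeasurableSet (cell d ε ξ) := by
  simp only [cell, ofPred_forall]
  exact MeasurableSet.iInter fun i =>
    measurableSet_Ico.preimage ((measurable_pi_apply i).comp (WithLp.measurable_ofLp 2 _))

theorem volume_cell (hε : 0 < ε) : volume (cell d ε ξ) = ENNReal.ofReal (ε ^ d) := by
  have hpre : cell d ε ξ = WithLp.ofLp ⁻¹' (univ.pi fun i => Ico (ε * ξ i) (ε * ξ i + ε)) := by
    ext x; simp [cell]
  rw [hpre, (PiLp.volume_preserving_ofLp (Fin d)).measure_preimage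
    (MeasurableSet.univ_pi fun _ => measurableSet_Ico).nullMeasurableSet, volume_pi_pi]
  simp [Finset.prod_const, ENNReal.ofReal_pow hε.le]

theorem cell_subset_image_unitCube (hε : 0 < ε) :
    cell d ε ξ ⊆ cellMapE d ε ξ '' unitCube d := by
  intro x hx
  refine ⟨WithLp.toLp 2 fun i => (x i - ε * ξ i) / ε, fun i => ?_, ?_⟩
  · obtain ⟨h₁, h₂⟩ := hx i
    exact ⟨div_nonneg (by linarith) hε.le, (div_le_one hε).2 (by linarith)⟩
  · ext i
    simp only [cellMapE]
    field_simp
    ring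

theorem cell_subset_of_mem_cellsIn (hε : 0 < ε) (hξ : ξ ∈ cellsIn d ε Ω) : cell d ε ξ ⊆ Ω :=
  (cell_subset_image_unitCube hε).trans hξ

theorem image_subset_cell (hε : 0 < ε) (hΓ : Γ ⊆ {y | ∀ i, y i ∈ Ioo (0 : ℝ) 1}) :
    cellMapE d ε ξ '' Γ ⊆ cell d ε ξ := by
  rintro _ ⟨y, hy, rfl⟩ i
  obtain ⟨h₁, h₂⟩ := hΓ hy i
  constructor <;> simp only [cellMapE] <;> nlinarith

theorem dist_cellMapE_le (hε : 0 < ε) {x y : E} (hx : x ∈ cell d ε ξ) (hy : y ∈ unitCube d) :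
    dist (cellMapE d ε ξ y) x ≤ √d * ε := by
  simpa using EuclideanSpace.dist_le_of_forall_dist_le (x := cellMapE d ε ξ y) (y := x) hε.le
    fun i => by
    obtain ⟨h₁, h₂⟩ := hx i
    obtain ⟨h₃, h₄⟩ := hy i
    rw [Real.dist_eq, abs_le]
    simp only [cellMapE]
    constructor <;> nlinarith

theorem isCompact_unitCube : IsCompact (unitCube d) := by
  have : unitCube d = WithLp.toLp 2 '' univ.pi fun _ => Icc 0 1 := by
    ext y
    simp only [unitCube, mem_ofPred_eq, mem_image, mem_univ_pi]
    exact ⟨fun h => ⟨y.ofLp, h, rfl⟩, by rintro ⟨x, hx, rfl⟩; exact hx⟩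
  rw [this]
  exact (isCompact_univ_pi fun _ => isCompact_Icc).image (PiLp.continuous_toLp 2 _)

theorem cellsIn_finite (hε : 0 < ε) (hΩ : Bornology.IsBounded Ω) : (cellsIn d ε Ω).Finite := by
  obtain ⟨r, hr⟩ := hΩ.subset_closedBall 0
  refine (finite_Icc (-fun _ => ⌈r / ε⌉) fun _ => ⌈r / ε⌉).subset fun ξ hξ => ?_
  have hcorner : cellMapE d ε ξ 0 ∈ Ω := hξ ⟨0, fun i => by simp, rfl⟩
  have hbound : ∀ i, |(ξ i : ℝ)| ≤ r / ε := fun i => by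
    have := (PiLp.norm_apply_le (cellMapE d ε ξ 0) i).trans (mem_closedBall_zero_iff.1 (hr hcorner))
    simp only [cellMapE, PiLp.zero_apply, mul_zero, add_zero, Real.norm_eq_abs, abs_mul,
      abs_of_pos hε] at this
    rwa [le_div_iff₀ hε, mul_comm]
  have hξi : ∀ i, |ξ i| ≤ ⌈r / ε⌉ := fun i => by
    exact_mod_cast (hbound i).trans (Int.le_ceil _)
  exact ⟨fun i => neg_le_of_abs_le (hξi i), fun i => le_of_abs_le (hξi i)⟩

theorem cellMapE_eq_add_smul :
    cellMapE d ε ξ = fun y => (WithLp.toLp 2 fun i => ε * ξ i : E) + ε • y := by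
  ext y i; simp [cellMapE]

theorem continuous_cellMapE : Continuous (cellMapE d ε ξ) := by
  rw [cellMapE_eq_add_smul]; fun_prop

theorem measurableEmbedding_cellMapE (hε : ε ≠ 0) : MeasurableEmbedding (cellMapE d ε ξ) := by
  rw [cellMapE_eq_add_smul]
  exact ((Homeomorph.smulOfNeZero ε hε).trans (Homeomorph.addLeft _)).measurableEmbedding

section Hausdorff

open Pointwise

variable {s : ℝ}

theorem hausdorffMeasure_image_cellMapE (hs : 0 ≤ s) (hε : 0 < ε) (A : Set E) :
    μH[s] (cellMapE d ε ξ '' A) = ENNReal.ofReal (ε ^ s) * μH[s] A := by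
  have himage : cellMapE d ε ξ '' A = (WithLp.toLp 2 fun i => ε * ξ i : E) +ᵥ ε • A := by
    rw [cellMapE_eq_add_smul, ← image_smul, ← image_vadd, image_image]; rfl
  rw [himage, hausdorffMeasure_vadd _ (Or.inl hs), Measure.hausdorffMeasure_smul₀ hs hε.ne',
    ENNReal.smul_def, smul_eq_mul, ← ENNReal.ofReal_coe_nnreal, NNReal.coe_rpow, coe_nnnorm,
    Real.norm_of_nonneg hε.le]

theorem hausdorffMeasure_restrict_image_cellMapE (hs : 0 ≤ s) (hε : 0 < ε) {A : Set E} :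
    (μH[s]).restrict (cellMapE d ε ξ '' A)
      = ENNReal.ofReal (ε ^ s) • (μH[s].restrict A).map (cellMapE d ε ξ) := by
  have hemb := measurableEmbedding_cellMapE (d := d) (ξ := ξ) hε.ne'
  ext B hB
  rw [Measure.restrict_apply hB, Measure.smul_apply, hemb.map_apply,
    Measure.restrict_apply (hemb.measurable hB),
    smul_eq_mul, ← hausdorffMeasure_image_cellMapE hs hε, image_preimage_inter]

theorem setIntegral_image_cellMapE (hs : 0 ≤ s) (hε : 0 < ε) {A : Set E} (g : E → ℝ) :
    ∫ x in cellMapE d ε ξ '' A, g x ∂μH[s] = ε ^ s * ∫ y in A, g (cellMapE d ε ξ y) ∂μH[s] := by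
  rw [hausdorffMeasure_restrict_image_cellMapE hs hε, integral_smul_measure,
    (measurableEmbedding_cellMapE hε.ne').integral_map,
    ENNReal.toReal_ofReal (Real.rpow_nonneg hε.le s), smul_eq_mul]

theorem integrableOn_image_cellMapE_iff (hs : 0 ≤ s) (hε : 0 < ε) {A : Set E} {g : E → ℝ} :
    IntegrableOn g (cellMapE d ε ξ '' A) μH[s]
      ↔ IntegrableOn (fun y => g (cellMapE d ε ξ y)) A μH[s] := by
  rw [IntegrableOn, hausdorffMeasure_restrict_image_cellMapE hs hε,
    integrable_smul_measure (by simp [Real.rpow_pos_of_pos hε]) ENNReal.ofReal_ne_top,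
    (measurableEmbedding_cellMapE hε.ne').integrable_map_iff]
  rfl

theorem hausdorffMeasure_membranes_lt_top (hs : 0 ≤ s) (hε : 0 < ε)
    (hΩ : Bornology.IsBounded Ω) (hΓ : μH[s] Γ < ⊤) : μH[s] (membranes d ε Ω Γ) < ⊤ :=
  (measure_biUnion_lt_top (cellsIn_finite hε hΩ) fun ξ _ => by
    rw [hausdorffMeasure_image_cellMapE hs hε]
    exact ENNReal.mul_lt_top ENNReal.ofReal_lt_top hΓ)

end Hausdorff

theorem pairwise_disjoint_cell (hε : 0 < ε) : Pairwise (Disjoint on cell d ε) :=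
  fun _ _ hne => disjoint_left.2 fun _ hx hx' =>
    hne (((cellIndex_eq_iff hε).2 hx).symm.trans ((cellIndex_eq_iff hε).2 hx'))

theorem pairwise_disjoint_image_cellMapE (hε : 0 < ε)
    (hΓ : Γ ⊆ {y | ∀ i, y i ∈ Ioo (0 : ℝ) 1}) :
    Pairwise (Disjoint on fun ξ => cellMapE d ε ξ '' Γ) :=
  fun _ _ hne => (pairwise_disjoint_cell hε hne).mono (image_subset_cell hε hΓ)
    (image_subset_cell hε hΓ)

end Cells

section Unfolding

variable {d : ℕ} {ε s : ℝ} {ξ : Fin d → ℤ} {Ω Γ : Set (EuclideanSpace ℝ (Fin d))}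

local notation "E" => EuclideanSpace ℝ (Fin d)

/-- The periodic unfolding operator `T_ε g (x, y) = g (ε⌊x/ε⌋ + εy)`, cut off to the cells
lying in `Ω`. -/
noncomputable def unfolding (ε : ℝ) (Ω : Set E) (g : E → ℝ) (p : E × E) : ℝ :=
  (cellsIn d ε Ω).indicator (fun ξ => g (cellMapE d ε ξ p.2)) (cellIndex ε p.1)

theorem unfolding_mul (f g : E → ℝ) (p : E × E) :
    unfolding ε Ω (fun x => f x * g x) p = unfolding ε Ω f p * unfolding ε Ω g p :=
  congrFun (indicator_mul _ _ _) _

theorem unfolding_of_mem_cell (hε : 0 < ε) (hξ : ξ ∈ cellsIn d ε Ω) (g : E → ℝ) {p : E × E}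
    (hp : p.1 ∈ cell d ε ξ) : unfolding ε Ω g p = g (cellMapE d ε ξ p.2) := by
  rw [unfolding, (cellIndex_eq_iff hε).2 hp, indicator_of_mem hξ]

theorem unfolding_eq_zero_of_notMem (hε : 0 < ε) (g : E → ℝ) {p : E × E}
    (hp : p ∉ ⋃ ξ ∈ cellsIn d ε Ω, cell d ε ξ ×ˢ univ) : unfolding ε Ω g p = 0 := by
  refine indicator_of_notMem (fun h => hp ?_) _
  exact mem_biUnion h ⟨mem_cell_cellIndex hε p.1, mem_univ _⟩

theorem measurable_cellIndex : Measurable (cellIndex (d := d) ε) :=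
  measurable_pi_lambda _ fun i => show Measurable fun x : E => ⌊x i / ε⌋ by fun_prop

theorem measurable_unfolding {g : E → ℝ} (hg : Measurable g) :
    Measurable (unfolding ε Ω g) := by
  have hF : Measurable fun q : (Fin d → ℤ) × E =>
      (cellsIn d ε Ω).indicator (fun ξ => g (cellMapE d ε ξ q.2)) q.1 :=
    measurable_from_prod_countable_right fun ξ => by
      by_cases hξ : ξ ∈ cellsIn d ε Ω
      · simp only [indicator_of_mem hξ]
        exact hg.comp continuous_cellMapE.measurable
      · simp [hξ]
  exact hF.comp (f := fun p : E × E => (cellIndex ε p.1, p.2))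
    ((measurable_cellIndex.comp measurable_fst).prodMk measurable_snd)

theorem abs_unfolding_le {g : E → ℝ} {B : ℝ} (hB : 0 ≤ B) (hg : ∀ x, |g x| ≤ B) (p : E × E) :
    |unfolding ε Ω g p| ≤ B := by
  unfold unfolding
  by_cases h : cellIndex ε p.1 ∈ cellsIn d ε Ω <;> simp [h, hg, hB]

section Cell

variable {ν : Measure (EuclideanSpace ℝ (Fin d))} [SFinite ν]

theorem restrict_prod_cell (hε : 0 < ε) (hξ : ξ ∈ cellsIn d ε Ω) :
    ((volume.restrict Ω).prod ν).restrict (cell d ε ξ ×ˢ univ)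
      = (volume.restrict (cell d ε ξ)).prod ν := by
  rw [← Measure.restrict_univ (μ := ν), ← Measure.prod_restrict, Measure.restrict_univ,
    Measure.restrict_restrict measurableSet_cell,
    inter_eq_self_of_subset_left (cell_subset_of_mem_cellsIn hε hξ)]

theorem setIntegral_unfolding_cell (hε : 0 < ε) (hξ : ξ ∈ cellsIn d ε Ω) (g : E → ℝ) :
    ∫ p in cell d ε ξ ×ˢ univ, unfolding ε Ω g p ∂(volume.restrict Ω).prod ν
      = ε ^ d * ∫ y, g (cellMapE d ε ξ y) ∂ν := by
  rw [setIntegral_congr_fun (measurableSet_cell.prod .univ)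
      fun p hp => unfolding_of_mem_cell hε hξ g hp.1,
    restrict_prod_cell hε hξ, integral_fun_snd fun y => g (cellMapE d ε ξ y),
    measureReal_restrict_apply_univ, measureReal_def,
    volume_cell hε, ENNReal.toReal_ofReal (by positivity), smul_eq_mul]

theorem integrableOn_unfolding_cell (hε : 0 < ε) (hξ : ξ ∈ cellsIn d ε Ω) {g : E → ℝ}
    (hg : Integrable (fun y => g (cellMapE d ε ξ y)) ν) :
    IntegrableOn (unfolding ε Ω g) (cell d ε ξ ×ˢ univ) ((volume.restrict Ω).prod ν) := by
  have := isFiniteMeasure_restrict.2 ((volume_cell (ξ := ξ) hε).trans_ne ENNReal.ofReal_ne_top)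
  refine IntegrableOn.congr_fun ?_ (fun p hp => (unfolding_of_mem_cell hε hξ g hp.1).symm)
    (measurableSet_cell.prod .univ)
  rw [IntegrableOn, restrict_prod_cell hε hξ]
  exact hg.comp_snd _

end Cell

variable {g : EuclideanSpace ℝ (Fin d) → ℝ}

theorem integrable_unfolding (hs : 0 ≤ s) (hε : 0 < ε) (hΩ : Bornology.IsBounded Ω)
    (hΓfin : μH[s] Γ < ⊤) (hg : IntegrableOn g (membranes d ε Ω Γ) μH[s]) :
    Integrable (unfolding ε Ω g) ((volume.restrict Ω).prod (μH[s].restrict Γ)) := by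
  have := isFiniteMeasure_restrict.2 hΓfin.ne
  obtain ⟨F, hF⟩ := (cellsIn_finite hε hΩ).exists_finset_coe
  have hgF : ∀ ξ ∈ F, IntegrableOn g (cellMapE d ε ξ '' Γ) μH[s] := fun ξ hξ =>
    hg.mono_set (subset_biUnion_of_mem (u := fun ξ => cellMapE d ε ξ '' Γ) (hF.subset hξ))
  refine IntegrableOn.integrable_of_forall_notMem_eq_zero
    (integrableOn_finset_iUnion.2 fun ξ hξ => integrableOn_unfolding_cell hε (hF.subset hξ)
      ((integrableOn_image_cellMapE_iff hs hε).1 (hgF ξ hξ)))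
    fun p hp => unfolding_eq_zero_of_notMem hε g (by rwa [← hF, Finset.set_biUnion_coe])

theorem integral_unfolding (hs : 0 ≤ s) (hε : 0 < ε) (hΩ : Bornology.IsBounded Ω)
    (hΓm : MeasurableSet Γ) (hΓ : Γ ⊆ {y | ∀ i, y i ∈ Ioo (0 : ℝ) 1}) (hΓfin : μH[s] Γ < ⊤)
    (hg : IntegrableOn g (membranes d ε Ω Γ) μH[s]) :
    ∫ p, unfolding ε Ω g p ∂(volume.restrict Ω).prod (μH[s].restrict Γ)
      = ε ^ ((d : ℝ) - s) * ∫ x in membranes d ε Ω Γ, g x ∂μH[s] := by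
  have := isFiniteMeasure_restrict.2 hΓfin.ne
  obtain ⟨F, hF⟩ := (cellsIn_finite hε hΩ).exists_finset_coe
  have hgF : ∀ ξ ∈ F, IntegrableOn g (cellMapE d ε ξ '' Γ) μH[s] := fun ξ hξ =>
    hg.mono_set (subset_biUnion_of_mem (u := fun ξ => cellMapE d ε ξ '' Γ) (hF.subset hξ))
  rw [← setIntegral_eq_integral_of_forall_compl_eq_zero (s := ⋃ ξ ∈ F, cell d ε ξ ×ˢ univ)
      fun p hp => unfolding_eq_zero_of_notMem hε g (by rwa [← hF, Finset.set_biUnion_coe]),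
    integral_biUnion_finset F (fun _ _ => measurableSet_cell.prod .univ)
      (fun ξ _ ξ' _ hne => disjoint_prod.2 (Or.inl (pairwise_disjoint_cell hε hne)))
      fun ξ hξ => integrableOn_unfolding_cell hε (hF.subset hξ)
        ((integrableOn_image_cellMapE_iff hs hε).1 (hgF ξ hξ)),
    membranes_eq_biUnion, ← hF, Finset.set_biUnion_coe,
    integral_biUnion_finset F
      (fun _ _ => (measurableEmbedding_cellMapE hε.ne').measurableSet_image.2 hΓm)
      (fun ξ _ ξ' _ hne => pairwise_disjoint_image_cellMapE hε hΓ hne) hgF, Finset.mul_sum]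
  refine Finset.sum_congr rfl fun ξ hξ => ?_
  rw [setIntegral_unfolding_cell hε (hF.subset hξ), setIntegral_image_cellMapE hs hε, ← mul_assoc,
    ← Real.rpow_add hε, sub_add_cancel, Real.rpow_natCast]

end Unfolding

namespace IsAdmissibleTestE

variable {d : ℕ} {Ω : Set (EuclideanSpace ℝ (Fin d))}
  {φ : EuclideanSpace ℝ (Fin d) → EuclideanSpace ℝ (Fin d) → ℝ}

local notation "E" => EuclideanSpace ℝ (Fin d)

theorem hasCompactSupport_unitCube (hφ : IsAdmissibleTestE d Ω φ) :
    HasCompactSupport fun q : E × unitCube d => φ q.1 q.2 := by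
  obtain ⟨-, ⟨K, hK, -, hK0⟩, -⟩ := hφ
  have : CompactSpace (unitCube d) := isCompact_iff_compactSpace.1 isCompact_unitCube
  exact .intro (hK.prod isCompact_univ) fun q hq => hK0 q.1 (fun h => hq ⟨h, mem_univ _⟩) q.2

theorem continuous_unitCube (hφ : IsAdmissibleTestE d Ω φ) :
    Continuous fun q : E × unitCube d => φ q.1 q.2 :=
  hφ.1.comp (continuous_fst.prodMk (continuous_subtype_val.comp continuous_snd))

theorem apply_add_intCast (hφ : IsAdmissibleTestE d Ω φ) (x y : E) (ξ : Fin d → ℤ) :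
    φ x (WithLp.toLp 2 fun i => y i + ξ i) = φ x y :=
  hφ.2.2 x y ξ

theorem exists_bound (hφ : IsAdmissibleTestE d Ω φ) : ∃ B, ∀ x y, |φ x y| ≤ B := by
  obtain ⟨B, hB⟩ := hφ.hasCompactSupport_unitCube.exists_bound_of_continuous hφ.continuous_unitCube
  refine ⟨B, fun x y => ?_⟩
  have hfract : WithLp.toLp 2 (fun i => Int.fract (y i)) ∈ unitCube d :=
    fun i => ⟨Int.fract_nonneg _, (Int.fract_lt_one _).le⟩
  have := hB (x, ⟨_, hfract⟩)
  rw [← hφ.apply_add_intCast x _ fun i => ⌊y i⌋] at this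
  simpa [Int.fract_add_floor] using this

theorem exists_modulus (hφ : IsAdmissibleTestE d Ω φ) {δ : ℝ} (hδ : 0 < δ) :
    ∃ η > 0, ∀ x x', ∀ y ∈ unitCube d, dist x x' < η → dist (φ x y) (φ x' y) < δ := by
  obtain ⟨η, hη, hφη⟩ := Metric.uniformContinuous_iff.1
    (hφ.hasCompactSupport_unitCube.uniformContinuous_of_continuous hφ.continuous_unitCube) δ hδ
  refine ⟨η, hη, fun x x' y hy hxx' => ?_⟩
  exact hφη (a := (x, ⟨y, hy⟩)) (b := (x', ⟨y, hy⟩)) (by simpa [Prod.dist_eq] using hxx')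

theorem apply_cellMapE_div (hφ : IsAdmissibleTestE d Ω φ) {ε : ℝ} (hε : ε ≠ 0) (x y : E)
    (ξ : Fin d → ℤ) : φ x (WithLp.toLp 2 fun i => cellMapE d ε ξ y i / ε) = φ x y := by
  rw [← hφ.apply_add_intCast x y ξ]
  congr 2
  ext i
  simp only [cellMapE]
  field_simp
  ring

theorem tendstoUniformlyOn_unfolding (hφ : IsAdmissibleTestE d Ω φ) (hΩ : IsOpen Ω)
    {ι : Type*} {l : Filter ι} {ε : ι → ℝ} (hε : ∀ n, 0 < ε n) (hεlim : Tendsto ε l (𝓝 0)) :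
    TendstoUniformlyOn (fun n => unfolding (ε n) Ω fun x => φ x (WithLp.toLp 2 fun i => x i / ε n))
      (fun p => φ p.1 p.2) l (univ ×ˢ unitCube d) := by
  obtain ⟨K, hK, hKΩ, hK0⟩ := hφ.2.1
  obtain ⟨ρ, hρ, hρΩ⟩ := hK.exists_thickening_subset_open hΩ hKΩ
  rw [Metric.tendstoUniformlyOn_iff]
  intro δ hδ
  obtain ⟨η, hη, hφη⟩ := hφ.exists_modulus hδ
  have hsmall : ∀ᶠ n in l, √d * ε n < min η ρ := by
    have := hεlim.const_mul √d
    rw [mul_zero] at this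
    exact this.eventually (gt_mem_nhds (lt_min hη hρ))
  filter_upwards [hsmall] with n hn
  rintro ⟨x, y⟩ ⟨-, hy⟩
  have hx := mem_cell_cellIndex (hε n) x
  have hdist : ∀ y' ∈ unitCube d, dist (cellMapE d (ε n) (cellIndex (ε n) x) y') x < min η ρ :=
    fun y' hy' => (dist_cellMapE_le (hε n) hx hy').trans_lt hn
  by_cases hξ : cellIndex (ε n) x ∈ cellsIn d (ε n) Ω
  · rw [unfolding_of_mem_cell (hε n) hξ _ hx, hφ.apply_cellMapE_div (hε n).ne', dist_comm]
    exact hφη _ _ y hy ((hdist y hy).trans_le (min_le_left _ _))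
  · -- a cell within `√d ε < ρ` of `K` lies in the `ρ`-thickening of `K`, hence in `Ω`
    have hxK : x ∉ K := fun hxK => hξ <| by
      rintro _ ⟨y', hy', rfl⟩
      exact hρΩ (Metric.mem_thickening_iff.2 ⟨x, hxK, (hdist y' hy').trans_le (min_le_right _ _)⟩)
    rw [hK0 x hxK y, unfolding, indicator_of_notMem hξ, dist_self]
    exact hδ

end IsAdmissibleTestE

section TwoScale

variable {d : ℕ} {ε s : ℝ} {Ω Γ : Set (EuclideanSpace ℝ (Fin d))}
  {φ : EuclideanSpace ℝ (Fin d) → EuclideanSpace ℝ (Fin d) → ℝ}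

local notation "E" => EuclideanSpace ℝ (Fin d)

theorem IsAdmissibleTestE.continuous_oscillating (hφ : IsAdmissibleTestE d Ω φ) :
    Continuous fun x : E => φ x (WithLp.toLp 2 fun i => x i / ε) :=
  hφ.1.comp (continuous_id.prodMk (by fun_prop))

theorem IsAdmissibleTestE.memLp (hφ : IsAdmissibleTestE d Ω φ) {μ : Measure (E × E)}
    [IsFiniteMeasure μ] {p : ENNReal} : MemLp (fun q => φ q.1 q.2) p μ :=
  have ⟨B, hB⟩ := hφ.exists_bound
  .of_bound hφ.1.aestronglyMeasurable B (.of_forall fun q => hB q.1 q.2)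

theorem IsAdmissibleTestE.memLp_unfolding (hφ : IsAdmissibleTestE d Ω φ) {μ : Measure (E × E)}
    [IsFiniteMeasure μ] {p : ENNReal} :
    MemLp (unfolding ε Ω fun x => φ x (WithLp.toLp 2 fun i => x i / ε)) p μ :=
  have ⟨B, hB⟩ := hφ.exists_bound
  .of_bound (measurable_unfolding hφ.continuous_oscillating.measurable).aestronglyMeasurable B
    (.of_forall fun q => abs_unfolding_le ((abs_nonneg _).trans (hB 0 0)) (fun _ => hB _ _) q)

theorem IsAdmissibleTestE.integrableOn_mul_oscillating (hφ : IsAdmissibleTestE d Ω φ)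
    {ν : Measure E} {S : Set E} (hS : ν S < ⊤) {v : E → ℝ} (hv : Measurable v)
    (hv2 : IntegrableOn (fun x => v x ^ 2) S ν) :
    IntegrableOn (fun x => v x * φ x (WithLp.toLp 2 fun i => x i / ε)) S ν := by
  have := isFiniteMeasure_restrict.2 hS.ne
  obtain ⟨B, hB⟩ := hφ.exists_bound
  have hv1 := ((memLp_two_iff_integrable_sq hv.aestronglyMeasurable).2 hv2).integrable one_le_two
  exact hv1.mul_bdd hφ.continuous_oscillating.aestronglyMeasurable (.of_forall fun _ => hB _ _)

theorem memLp_unfolding (hs : 0 ≤ s) (hε : 0 < ε) (hΩ : Bornology.IsBounded Ω)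
    (hΓfin : μH[s] Γ < ⊤) {v : E → ℝ} (hv : Measurable v)
    (hv2 : IntegrableOn (fun x => v x ^ 2) (membranes d ε Ω Γ) μH[s]) :
    MemLp (unfolding ε Ω v) 2 ((volume.restrict Ω).prod (μH[s].restrict Γ)) := by
  refine (memLp_two_iff_integrable_sq (measurable_unfolding hv).aestronglyMeasurable).2 ?_
  simp only [sq] at hv2 ⊢
  exact (integrable_unfolding hs hε hΩ hΓfin hv2).congr (.of_forall (unfolding_mul v v))

theorem inner_toLp_unfolding (hs : 0 ≤ s) (hε : 0 < ε) (hΩ : Bornology.IsBounded Ω)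
    (hΓm : MeasurableSet Γ) (hΓ : Γ ⊆ {y | ∀ i, y i ∈ Ioo (0 : ℝ) 1}) (hΓfin : μH[s] Γ < ⊤)
    {f g : E → ℝ} (hf : MemLp (unfolding ε Ω f) 2 ((volume.restrict Ω).prod (μH[s].restrict Γ)))
    (hg : MemLp (unfolding ε Ω g) 2 ((volume.restrict Ω).prod (μH[s].restrict Γ)))
    (hfg : IntegrableOn (fun x => f x * g x) (membranes d ε Ω Γ) μH[s]) :
    inner ℝ (hf.toLp _) (hg.toLp _)
      = ε ^ ((d : ℝ) - s) * ∫ x in membranes d ε Ω Γ, f x * g x ∂μH[s] := by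
  simp only [L2.inner_toLp_eq_integral, ← unfolding_mul,
    integral_unfolding hs hε hΩ hΓm hΓ hΓfin hfg]

end TwoScale

theorem two_scale_compactness_surfaces_general
    (d : ℕ) (hd : 2 ≤ d)
    (Γ : Set (EuclideanSpace ℝ (Fin d))) (hΓc : IsCompact Γ)
    (hΓsub : Γ ⊆ {y : EuclideanSpace ℝ (Fin d) | ∀ i, y i ∈ Set.Ioo (0 : ℝ) 1})
    (hΓfin : μH[(d : ℝ) - 1] Γ < ⊤)
    (Ω : Set (EuclideanSpace ℝ (Fin d))) (hΩo : IsOpen Ω) (hΩb : Bornology.IsBounded Ω)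
    (εn : ℕ → ℝ) (hεpos : ∀ n, 0 < εn n) (hεlim : Tendsto εn atTop (𝓝 0))
    (v : ℕ → EuclideanSpace ℝ (Fin d) → ℝ) (hmeas : ∀ n, Measurable (v n))
    (hint : ∀ n, IntegrableOn (fun x => v n x ^ 2) (membranes d (εn n) Ω Γ) μH[(d : ℝ) - 1])
    (C : ℝ)
    (hbd : ∀ n, εn n * ∫ x in membranes d (εn n) Ω Γ, v n x ^ 2 ∂μH[(d : ℝ) - 1] ≤ C) :
    ∃ σ : ℕ → ℕ, StrictMono σ ∧
      ∃ v₀ : EuclideanSpace ℝ (Fin d) × EuclideanSpace ℝ (Fin d) → ℝ,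
        MemLp v₀ 2 ((volume.restrict Ω).prod ((μH[(d : ℝ) - 1]).restrict Γ)) ∧
        ∀ φ, IsAdmissibleTestE d Ω φ →
          Tendsto
            (fun k => εn (σ k) *
              ∫ x in membranes d (εn (σ k)) Ω Γ,
                v (σ k) x * φ x (WithLp.toLp 2 (fun i => x i / εn (σ k)) : EuclideanSpace ℝ (Fin d))
                ∂μH[(d : ℝ) - 1])
            atTop
            (𝓝 (∫ x in Ω, ∫ y in Γ, v₀ (x, y) * φ x y ∂μH[(d : ℝ) - 1])) := by
  have hs : 0 ≤ (d : ℝ) - 1 := by linarith [show (2 : ℝ) ≤ d by exact_mod_cast hd]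
  have hscale : ∀ n, εn n ^ ((d : ℝ) - ((d : ℝ) - 1)) = εn n := by simp
  have hΓm := hΓc.isClosed.measurableSet
  have := isFiniteMeasure_restrict.2 (hΩb.measure_lt_top (μ := volume)).ne
  have := isFiniteMeasure_restrict.2 hΓfin.ne
  set μ := (volume.restrict Ω).prod (μH[(d : ℝ) - 1].restrict Γ)
  have : SFinite μ := inferInstance
  have : Fact ((2 : ENNReal) ≠ ⊤) := ⟨ENNReal.ofNat_ne_top⟩
  have hU n := memLp_unfolding hs (hεpos n) hΩb hΓfin (hmeas n) (hint n)
  have hUC n : ‖(hU n).toLp _‖ ≤ √C := by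
    refine Real.le_sqrt_of_sq_le ?_
    rw [← real_inner_self_eq_norm_sq, inner_toLp_unfolding hs (hεpos n) hΩb hΓm hΓsub hΓfin,
      hscale]
    · simpa only [sq] using hbd n
    · simpa only [sq] using hint n
  obtain ⟨σ, hσ, w, hw⟩ := exists_subseq_tendsto_inner (𝕜 := ℝ) hUC
  refine ⟨σ, hσ, w, Lp.memLp w, fun φ hφ => ?_⟩
  have hΦ : Tendsto (fun n => (hφ.memLp_unfolding (ε := εn n) (μ := μ) (p := 2)).toLp _) atTop
      (𝓝 (hφ.memLp.toLp fun q => φ q.1 q.2)) :=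
    tendsto_toLp_of_tendstoUniformlyOn (ae_mem_prod_restrict hΩo.measurableSet hΓm) _ _
      ((hφ.tendstoUniformlyOn_unfolding hΩo hεpos hεlim).mono
        (prod_mono (subset_univ Ω) fun y hy i => Ioo_subset_Icc_self (hΓsub hy i)))
  convert tendsto_inner_of_weak_of_tendsto (fun k => hUC (σ k)) hw (hΦ.comp hσ.tendsto_atTop)
    using 2 with k
  · rw [Function.comp_apply, inner_toLp_unfolding hs (hεpos _) hΩb hΓm hΓsub hΓfin, hscale]
    exact hφ.integrableOn_mul_oscillating (hausdorffMeasure_membranes_lt_top hs (hεpos _) hΩb hΓfin)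
      (hmeas _) (hint _)
  · exact (L2.inner_toLp_eq_integral_prod w (g := fun q => φ q.1 q.2) hφ.memLp).symm

/-- Two-scale compactness on oscillating surfaces: a sequence with
`ε_n ∫_{Γ^{ε_n}} v_n² dH^{d−1}` bounded has a subsequence two-scale converging
(in the surface sense) to some `v ∈ L²(Ω × Γ)`. -/
theorem two_scale_compactness_surfaces
    (d : ℕ) (hd : 2 ≤ d)
    (Γ : Set (EuclideanSpace ℝ (Fin d))) (hΓc : IsCompact Γ)
    (hΓsub : Γ ⊆ {y : EuclideanSpace ℝ (Fin d) | ∀ i, y i ∈ Set.Ioo (0 : ℝ) 1})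
    (hΓpos : 0 < μH[(d : ℝ) - 1] Γ) (hΓfin : μH[(d : ℝ) - 1] Γ < ⊤)
    (Ω : Set (EuclideanSpace ℝ (Fin d))) (hΩo : IsOpen Ω) (hΩb : Bornology.IsBounded Ω)
    (εn : ℕ → ℝ) (hεpos : ∀ n, 0 < εn n) (hεlim : Tendsto εn atTop (𝓝 0))
    (v : ℕ → EuclideanSpace ℝ (Fin d) → ℝ) (hmeas : ∀ n, Measurable (v n))
    (hint : ∀ n, IntegrableOn (fun x => v n x ^ 2) (membranes d (εn n) Ω Γ) μH[(d : ℝ) - 1])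
    (C : ℝ)
    (hbd : ∀ n, εn n * ∫ x in membranes d (εn n) Ω Γ, v n x ^ 2 ∂μH[(d : ℝ) - 1] ≤ C) :
    ∃ σ : ℕ → ℕ, StrictMono σ ∧
      ∃ v₀ : EuclideanSpace ℝ (Fin d) × EuclideanSpace ℝ (Fin d) → ℝ,
        MemLp v₀ 2 ((volume.restrict Ω).prod ((μH[(d : ℝ) - 1]).restrict Γ)) ∧
        ∀ φ, IsAdmissibleTestE d Ω φ →
          Tendsto
            (fun k => εn (σ k) *
              ∫ x in membranes d (εn (σ k)) Ω Γ,
                v (σ k) x * φ x (WithLp.toLp 2 (fun i => x i / εn (σ k)) : EuclideanSpace ℝ (Fin d))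
                ∂μH[(d : ℝ) - 1])
            atTop
            (𝓝 (∫ x in Ω, ∫ y in Γ, v₀ (x, y) * φ x y ∂μH[(d : ℝ) - 1])) :=
  two_scale_compactness_surfaces_general d hd Γ hΓc hΓsub hΓfin Ω hΩo hΩb εn hεpos hεlim v hmeas
    hint C hbd
end

section
/- Moser–Alikakos iteration lemma (sequence form): Let C ≥ 1, b ≥ 0, M ≥ 0, and let (a_k)_{k≥0} be a sequence of nonnegative real numbers satisfying a_k ≤ (C · 2^{b k})^{1/2^k} · max{a_{k−1}, M} for every k ≥ 1. Then a_k ≤ C · 4^{b} · max{a_0, M} for every k ≥ 0; in particular the sequence (a_k) is bounded, uniformly in terms of C, b, a_0 and M only. -/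
/-!
Unrolling the recursion bounds `a k` by the partial product of the factors
`(C 2^{bj})^{1/2^j}` times `max (a 0) M`; since every factor is at least `1`, the constant `M`
is absorbed at each step. The partial product equals `C^{∑ 2^{-j}} · 2^{b ∑ j 2^{-j}}`, and the
two series converge to `1` and `2`.
-/

open Finset

theorem le_prod_mul_max_of_le_mul_max {a f : ℕ → ℝ} {M : ℝ} (hM : 0 ≤ M)
    (hf : ∀ k, 1 ≤ f k) (hrec : ∀ k, a (k + 1) ≤ f k * max (a k) M) (k : ℕ) :
    a k ≤ (∏ j ∈ range k, f j) * max (a 0) M := by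
  induction k with
  | zero => simp
  | succ k ih =>
    have hprod : 1 ≤ ∏ j ∈ range k, f j := one_le_prod fun j _ => hf j
    have hmax : max (a k) M ≤ (∏ j ∈ range k, f j) * max (a 0) M :=
      max_le ih <| (le_max_right _ _).trans <|
        le_mul_of_one_le_left (hM.trans (le_max_right _ _)) hprod
    calc a (k + 1) ≤ f k * max (a k) M := hrec k
      _ ≤ f k * ((∏ j ∈ range k, f j) * max (a 0) M) :=
        mul_le_mul_of_nonneg_left hmax (zero_le_one.trans (hf k))
      _ = (∏ j ∈ range (k + 1), f j) * max (a 0) M := by rw [prod_range_succ]; ring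

theorem sum_range_half_pow_succ_le_one (k : ℕ) : ∑ j ∈ range k, (1 / 2 : ℝ) ^ (j + 1) ≤ 1 := by
  simp only [pow_succ, ← sum_mul]
  linarith [sum_geometric_two_le k]

theorem sum_range_succ_mul_half_pow_succ_le_two (k : ℕ) :
    ∑ j ∈ range k, ((j : ℝ) + 1) * (1 / 2) ^ (j + 1) ≤ 2 := by
  have hsum := hasSum_coe_mul_geometric_of_norm_lt_one (𝕜 := ℝ) (r := 1 / 2) (by norm_num)
  rw [show (1 / 2 : ℝ) / (1 - 1 / 2) ^ 2 = 2 by norm_num] at hsum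
  have hpartial := sum_le_hasSum (range (k + 1)) (fun n _ => by positivity) hsum
  rw [sum_range_succ'] at hpartial
  simpa using hpartial

theorem prod_range_rpow_half_pow_le {C b : ℝ} (hC : 1 ≤ C) (hb : 0 ≤ b) (k : ℕ) :
    ∏ j ∈ range k, (C * 2 ^ (b * ((j + 1 : ℕ) : ℝ))) ^ ((1 : ℝ) / 2 ^ (j + 1)) ≤ C * 4 ^ b := by
  have hfactor : ∀ j : ℕ, (C * 2 ^ (b * ((j + 1 : ℕ) : ℝ))) ^ ((1 : ℝ) / 2 ^ (j + 1)) =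
      C ^ ((1 / 2 : ℝ) ^ (j + 1)) * 2 ^ (b * (((j : ℝ) + 1) * (1 / 2) ^ (j + 1))) := by
    intro j
    rw [Real.mul_rpow (by linarith) (by positivity), ← Real.rpow_mul (by norm_num), ← one_div_pow,
      Nat.cast_succ, mul_assoc]
  simp only [hfactor, prod_mul_distrib, ← Real.rpow_sum_of_pos (by linarith : (0 : ℝ) < C),
    ← Real.rpow_sum_of_pos (by norm_num : (0 : ℝ) < 2), ← mul_sum]
  have h4 : (4 : ℝ) ^ b = 2 ^ (b * 2) := by
    rw [mul_comm, Real.rpow_mul (by norm_num)]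
    norm_num
  have hCpow : C ^ ∑ j ∈ range k, (1 / 2 : ℝ) ^ (j + 1) ≤ C :=
    (Real.rpow_le_rpow_of_exponent_le hC (sum_range_half_pow_succ_le_one k)).trans_eq
      (Real.rpow_one C)
  have htwo : (2 : ℝ) ^ (b * ∑ j ∈ range k, ((j : ℝ) + 1) * (1 / 2) ^ (j + 1)) ≤ 2 ^ (b * 2) :=
    Real.rpow_le_rpow_of_exponent_le one_le_two
      (mul_le_mul_of_nonneg_left (sum_range_succ_mul_half_pow_succ_le_two k) hb)
  rw [h4]
  exact mul_le_mul hCpow htwo (by positivity) (by linarith)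

theorem alikakos_iteration_lemma_general
    (C b M : ℝ) (hC : 1 ≤ C) (hb : 0 ≤ b) (hM : 0 ≤ M)
    (a : ℕ → ℝ)
    (hrec : ∀ k : ℕ, 1 ≤ k →
      a k ≤ (C * 2 ^ (b * (k : ℝ))) ^ ((1 : ℝ) / 2 ^ k) * max (a (k - 1)) M) :
    ∀ k, a k ≤ C * 4 ^ b * max (a 0) M := by
  have hf : ∀ j : ℕ, 1 ≤ (C * 2 ^ (b * ((j + 1 : ℕ) : ℝ))) ^ ((1 : ℝ) / 2 ^ (j + 1)) := fun j =>
    Real.one_le_rpow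
      (one_le_mul_of_one_le_of_one_le hC (Real.one_le_rpow one_le_two (by positivity)))
      (by positivity)
  intro k
  calc a k ≤ (∏ j ∈ range k, (C * 2 ^ (b * ((j + 1 : ℕ) : ℝ))) ^ ((1 : ℝ) / 2 ^ (j + 1))) *
        max (a 0) M :=
      le_prod_mul_max_of_le_mul_max hM hf
        (fun j => by simpa only [Nat.add_sub_cancel] using hrec (j + 1) (by omega)) k
    _ ≤ C * 4 ^ b * max (a 0) M :=
        mul_le_mul_of_nonneg_right (prod_range_rpow_half_pow_le hC hb k)
          (hM.trans (le_max_right _ _))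

/-- Moser–Alikakos iteration lemma (sequence form): if
`a_k ≤ (C·2^{bk})^{1/2^k} · max(a_{k−1}, M)` for all `k ≥ 1`, with `C ≥ 1`,
`b ≥ 0`, `M ≥ 0` and `a_k ≥ 0`, then `a_k ≤ C·4^b · max(a_0, M)` for all `k`. -/
theorem alikakos_iteration_lemma
    (C b M : ℝ) (hC : 1 ≤ C) (hb : 0 ≤ b) (hM : 0 ≤ M)
    (a : ℕ → ℝ) (ha : ∀ k, 0 ≤ a k)
    (hrec : ∀ k : ℕ, 1 ≤ k →
      a k ≤ (C * 2 ^ (b * (k : ℝ))) ^ ((1 : ℝ) / 2 ^ k) * max (a (k - 1)) M) :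
    ∀ k, a k ≤ C * 4 ^ b * max (a 0) M :=
  alikakos_iteration_lemma_general C b M hC hb hM a hrec
end
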